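/- Let (A,[·,·],α) be a finite-dimensional multiplicative Hom-Leibniz algebra over a field K with α² = id, and suppose {·,·} is a multiplicative Hom-Leibniz algebra structure on the dual space A* with structure map α* (the transpose of α) satisfying (α*)² = id. Then the following are equivalent: (i) the direct sum A ⊕ A*, equipped with the bracket [x+a*, y+b*]' = ([x,y] + L*_{{,}}(a*)y + (−L*_{{,}}−R*_{{,}})(b*)x) + ({a*,b*} + L*_{[,]}(x)b* + (−L*_{[,]}−R*_{[,]})(y)a*) and the linear map Φ = α⊕α*, is a Hom-Leibniz algebra for which the bilinear form B(x+a*, y+b*) = ⟨a*,y⟩ − ⟨b*,x⟩ is Φ-invariant, i.e. B([Φ(u),Φ(w)]' + [Φ(w),Φ(u)]', Φ(v)) = B(Φ(u), [Φ(v),Φ(w)]') for all u,v,w ∈ A ⊕ A* (the standard Manin triple); (ii) (A, A*, L*_{[,]}, −L*_{[,]}−R*_{[,]}, α*, L*_{{,}}, −L*_{{,}}−R*_{{,}}, α) is a matched pair of Hom-Leibniz algebras. -/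

import Mathlib

/-- A Hom-Leibniz algebra structure. -/
def HomLeibniz {K A : Type*} [Field K] [AddCommGroup A] [Module K A]
    (br : A →ₗ[K] A →ₗ[K] A) (α : A →ₗ[K] A) : Prop :=
  ∀ x y z : A, br (α x) (br y z) = br (br x y) (α z) + br (α y) (br x z)

/-- A bimodule `(l, r, β, V)` of a Hom-Leibniz algebra `(A, br, α)`. -/
def HomLeibnizBimodule {K A V : Type*} [Field K] [AddCommGroup A] [Module K A]
    [AddCommGroup V] [Module K V]
    (br : A →ₗ[K] A →ₗ[K] A) (α : A →ₗ[K] A)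
    (l r : A →ₗ[K] V →ₗ[K] V) (β : V →ₗ[K] V) : Prop :=
  (∀ x y v, l (α x) (l y v) = l (br x y) (β v) + l (α y) (l x v)) ∧
  (∀ x y v, l (α x) (r y v) = r (α y) (l x v) + r (br x y) (β v)) ∧
  (∀ x y v, r (br x y) (β v) = r (α y) (r x v) + l (α x) (r y v)) ∧
  (∀ x v, β (l x v) = l (α x) (β v)) ∧
  (∀ x v, β (r x v) = r (α x) (β v))

/-- A matched pair `(A, B, l_A, r_A, β, l_B, r_B, α)` of Hom-Leibniz algebras. -/
def HomLeibnizMatchedPair {K A B : Type*} [Field K] [AddCommGroup A] [Module K A]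
    [AddCommGroup B] [Module K B]
    (brA : A →ₗ[K] A →ₗ[K] A) (αA : A →ₗ[K] A)
    (brB : B →ₗ[K] B →ₗ[K] B) (αB : B →ₗ[K] B)
    (lA rA : A →ₗ[K] B →ₗ[K] B) (lB rB : B →ₗ[K] A →ₗ[K] A) : Prop :=
  HomLeibniz brA αA ∧ HomLeibniz brB αB ∧
  HomLeibnizBimodule brA αA lA rA αB ∧
  HomLeibnizBimodule brB αB lB rB αA ∧
  (∀ (x : A) (a b : B), lA (αA x) (brB a b) =
      lA (rB a x) (αB b) + rA (rB b x) (αB a) +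
        brB (lA x a) (αB b) + brB (αB a) (lA x b)) ∧
  (∀ (x : A) (a b : B), brB (αB a) (lA x b) + rA (rB b x) (αB a) =
      brB (rA x a) (αB b) + lA (lB a x) (αB b) + lA (αA x) (brB a b)) ∧
  (∀ (x : A) (a b : B), brB (αB a) (rA x b) + rA (lB b x) (αB a) =
      rA (αA x) (brB a b) + brB (αB b) (rA x a) + rA (lB a x) (αB b)) ∧
  (∀ (x y : A) (a : B), lB (αB a) (brA x y) =
      lB (rA x a) (αA y) + rB (rA y a) (αA x) +
        brA (lB a x) (αA y) + brA (αA x) (lB a y)) ∧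
  (∀ (x y : A) (a : B), brA (αA x) (lB a y) + rB (rA y a) (αA x) =
      brA (rB a x) (αA y) + lB (lA x a) (αA y) + lB (αB a) (brA x y)) ∧
  (∀ (x y : A) (a : B), brA (αA x) (rB a y) + rB (lA y a) (αA x) =
      rB (αB a) (brA x y) + brA (αA y) (rB a x) + rB (lA x a) (αA y))

/-!
The bracket of the standard Manin triple on `A ⊕ A*` is the bracket of the double `A ⋈ A*` built
from the operators `L*`, `−L*−R*`, and the skew pairing is invariant for it by a direct computation,
whatever the two brackets are. Splitting the Hom-Leibniz identity of a double `A ⋈ B` into its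
components on pure elements of `A` and of `B` gives exactly the Hom-Leibniz identities of `A` and
`B`, the first three axioms of both bimodules and (MP1)–(MP6). The two remaining bimodule axioms,
compatibility of the actions with the twisting maps, hold for the dual operators because `α` is
multiplicative and involutive and `α*` is its transpose.
-/

section MatchedPair

variable {K A B : Type*} [Field K] [AddCommGroup A] [Module K A] [AddCommGroup B] [Module K B]

def matchedPairBracket (brA : A →ₗ[K] A →ₗ[K] A) (brB : B →ₗ[K] B →ₗ[K] B)
    (lA rA : A →ₗ[K] B →ₗ[K] B) (lB rB : B →ₗ[K] A →ₗ[K] A) :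
    A × B →ₗ[K] A × B →ₗ[K] A × B :=
  LinearMap.mk₂ K
    (fun p q => (brA p.1 q.1 + lB p.2 q.1 + rB q.2 p.1, brB p.2 q.2 + lA p.1 q.2 + rA q.1 p.2))
    (fun _ _ _ => by ext <;> simp only [Prod.fst_add, Prod.snd_add, map_add,
      LinearMap.add_apply] <;> abel)
    (fun _ _ _ => by ext <;> simp)
    (fun _ _ _ => by ext <;> simp only [Prod.fst_add, Prod.snd_add, map_add,
      LinearMap.add_apply] <;> abel)
    (fun _ _ _ => by ext <;> simp)

variable {brA : A →ₗ[K] A →ₗ[K] A} {αA : A →ₗ[K] A} {brB : B →ₗ[K] B →ₗ[K] B}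
  {αB : B →ₗ[K] B} {lA rA : A →ₗ[K] B →ₗ[K] B} {lB rB : B →ₗ[K] A →ₗ[K] A}

@[simp]
lemma matchedPairBracket_apply (p q : A × B) :
    matchedPairBracket brA brB lA rA lB rB p q =
      (brA p.1 q.1 + lB p.2 q.1 + rB q.2 p.1, brB p.2 q.2 + lA p.1 q.2 + rA q.1 p.2) :=
  rfl

lemma HomLeibnizMatchedPair.homLeibniz_matchedPairBracket
    (h : HomLeibnizMatchedPair brA αA brB αB lA rA lB rB) :
    HomLeibniz (matchedPairBracket brA brB lA rA lB rB) (αA.prodMap αB) := by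
  obtain ⟨hA, hB, ⟨modB₁, modB₂, modB₃, -, -⟩, ⟨modA₁, modA₂, modA₃, -, -⟩,
    mp1, mp2, mp3, mp4, mp5, mp6⟩ := h
  rintro ⟨x, a⟩ ⟨y, b⟩ ⟨z, c⟩
  ext
  · simp only [matchedPairBracket_apply, LinearMap.prodMap_apply, map_add, LinearMap.add_apply,
      Prod.fst_add]
    linear_combination (norm := abel) hA x y z + mp4 y z a + mp5 x z b + mp6 x y c
      + modA₁ a b z + modA₂ a c y + modA₃ b c x
  · simp only [matchedPairBracket_apply, LinearMap.prodMap_apply, map_add, LinearMap.add_apply,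
      Prod.snd_add]
    linear_combination (norm := abel) hB a b c + mp1 x b c + mp2 y a c + mp3 z a b
      + modB₁ x y c + modB₂ x z b + modB₃ y z a

lemma HomLeibnizMatchedPair.of_homLeibniz_matchedPairBracket
    (h : HomLeibniz (matchedPairBracket brA brB lA rA lB rB) (αA.prodMap αB))
    (hlA : ∀ x a, αB (lA x a) = lA (αA x) (αB a)) (hrA : ∀ x a, αB (rA x a) = rA (αA x) (αB a))
    (hlB : ∀ a x, αA (lB a x) = lB (αB a) (αA x)) (hrB : ∀ a x, αA (rB a x) = rB (αB a) (αA x)) :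
    HomLeibnizMatchedPair brA αA brB αB lA rA lB rB := by
  have hA x a y b z c := congrArg Prod.fst (h (x, a) (y, b) (z, c))
  have hB x a y b z c := congrArg Prod.snd (h (x, a) (y, b) (z, c))
  simp only [matchedPairBracket_apply, LinearMap.prodMap_apply, map_add, LinearMap.add_apply,
    Prod.fst_add, Prod.snd_add] at hA hB
  refine ⟨fun x y z => ?_, fun a b c => ?_, ⟨fun x y v => ?_, fun x y v => ?_, fun x y v => ?_,
    hlA, hrA⟩, ⟨fun a b v => ?_, fun a b v => ?_, fun a b v => ?_, hlB, hrB⟩,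
    fun x a b => ?_, fun x a b => ?_, fun x a b => ?_,
    fun x y a => ?_, fun x y a => ?_, fun x y a => ?_⟩
  · simpa using hA x 0 y 0 z 0
  · simpa using hB 0 a 0 b 0 c
  · simpa using hB x 0 y 0 0 v
  · simpa using hB x 0 0 v y 0
  · simpa using hB 0 v x 0 y 0
  · simpa using hA 0 a 0 b v 0
  · simpa using hA 0 a v 0 0 b
  · simpa using hA v 0 0 a 0 b
  · simpa [add_assoc, add_comm, add_left_comm] using hB x 0 0 a 0 b
  · simpa using hB 0 a x 0 0 b
  · simpa [add_assoc, add_comm, add_left_comm] using hB 0 a 0 b x 0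
  · simpa [add_assoc, add_comm, add_left_comm] using hA 0 a x 0 y 0
  · simpa using hA x 0 0 a y 0
  · simpa [add_assoc, add_comm, add_left_comm] using hA x 0 y 0 0 a

theorem homLeibniz_matchedPairBracket_iff
    (hlA : ∀ x a, αB (lA x a) = lA (αA x) (αB a)) (hrA : ∀ x a, αB (rA x a) = rA (αA x) (αB a))
    (hlB : ∀ a x, αA (lB a x) = lB (αB a) (αA x)) (hrB : ∀ a x, αA (rB a x) = rB (αB a) (αA x)) :
    HomLeibniz (matchedPairBracket brA brB lA rA lB rB) (αA.prodMap αB) ↔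
      HomLeibnizMatchedPair brA αA brB αB lA rA lB rB :=
  ⟨fun h => .of_homLeibniz_matchedPairBracket h hlA hrA hlB hrB,
    HomLeibnizMatchedPair.homLeibniz_matchedPairBracket⟩

end MatchedPair

section DualOperators

variable {K A : Type*} [Field K] [AddCommGroup A] [Module K A]
  {br : A →ₗ[K] A →ₗ[K] A} {α : A →ₗ[K] A}
  {brD : (A →ₗ[K] K) →ₗ[K] (A →ₗ[K] K) →ₗ[K] (A →ₗ[K] K)} {αD : (A →ₗ[K] K) →ₗ[K] (A →ₗ[K] K)}
  {La Ra : A →ₗ[K] (A →ₗ[K] K) →ₗ[K] (A →ₗ[K] K)} {Lb Rb : (A →ₗ[K] K) →ₗ[K] A →ₗ[K] A}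

lemma dualLeftMul_equivariant (hαD : ∀ a x, αD a x = a (α x))
    (hmul : ∀ x y, α (br x y) = br (α x) (α y)) (hinv : ∀ x, α (α x) = x)
    (hLa : ∀ x y a, La x a y = -(a (br x y))) (x : A) (a : A →ₗ[K] K) :
    αD (La x a) = La (α x) (αD a) := by
  ext y
  simp only [hαD, hLa, hmul, hinv]

lemma dualRightMul_equivariant (hαD : ∀ a x, αD a x = a (α x))
    (hmul : ∀ x y, α (br x y) = br (α x) (α y)) (hinv : ∀ x, α (α x) = x)
    (hRa : ∀ x y a, Ra x a y = -(a (br y x))) (x : A) (a : A →ₗ[K] K) :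
    αD (Ra x a) = Ra (α x) (αD a) := by
  ext y
  simp only [hαD, hRa, hmul, hinv]

lemma predualLeftMul_equivariant (hαD : ∀ a x, αD a x = a (α x))
    (hmulD : ∀ a b, αD (brD a b) = brD (αD a) (αD b)) (hinv : ∀ x, α (α x) = x)
    (hLb : ∀ a b x, b (Lb a x) = -(brD a b x)) (a : A →ₗ[K] K) (x : A) :
    α (Lb a x) = Lb (αD a) (α x) := by
  have hinvD : αD (αD a) = a := by ext; simp only [hαD, hinv]
  refine Module.eval_apply_injective K (LinearMap.ext fun b => ?_)
  simp only [Module.Dual.eval_apply, ← hαD, hLb, hmulD, hinvD]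

lemma predualRightMul_equivariant (hαD : ∀ a x, αD a x = a (α x))
    (hmulD : ∀ a b, αD (brD a b) = brD (αD a) (αD b)) (hinv : ∀ x, α (α x) = x)
    (hRb : ∀ a b x, b (Rb a x) = -(brD b a x)) (a : A →ₗ[K] K) (x : A) :
    α (Rb a x) = Rb (αD a) (α x) := by
  have hinvD : αD (αD a) = a := by ext; simp only [hαD, hinv]
  refine Module.eval_apply_injective K (LinearMap.ext fun b => ?_)
  simp only [Module.Dual.eval_apply, ← hαD, hRb, hmulD, hinvD]

def dualSkewPairing (p q : A × (A →ₗ[K] K)) : K := p.2 q.1 - q.2 p.1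

lemma dualSkewPairing_invariant (hLa : ∀ x y a, La x a y = -(a (br x y)))
    (hRa : ∀ x y a, Ra x a y = -(a (br y x))) (hLb : ∀ a b x, b (Lb a x) = -(brD a b x))
    (hRb : ∀ a b x, b (Rb a x) = -(brD b a x)) (u v w : A × (A →ₗ[K] K)) :
    let bracket : A × (A →ₗ[K] K) → A × (A →ₗ[K] K) → A × (A →ₗ[K] K) := fun p q =>
      (br p.1 q.1 + Lb p.2 q.1 + (-(Lb q.2 p.1) - Rb q.2 p.1),
       brD p.2 q.2 + La p.1 q.2 + (-(La q.1 p.2) - Ra q.1 p.2))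
    dualSkewPairing (bracket u w + bracket w u) v = dualSkewPairing u (bracket v w) := by
  simp only [dualSkewPairing, Prod.fst_add, Prod.snd_add, map_add, map_sub, map_neg,
    LinearMap.add_apply, LinearMap.sub_apply, LinearMap.neg_apply, hLa, hRa, hLb, hRb]
  ring

end DualOperators

theorem standard_manin_triple_iff_matchedPair_general
    {K A : Type*} [Field K] [AddCommGroup A] [Module K A]
    (br : A →ₗ[K] A →ₗ[K] A) (α : A →ₗ[K] A)
    (hmul : ∀ x y : A, α (br x y) = br (α x) (α y))
    (hinv : α ∘ₗ α = LinearMap.id)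
    (brD : (A →ₗ[K] K) →ₗ[K] (A →ₗ[K] K) →ₗ[K] (A →ₗ[K] K))
    (αD : (A →ₗ[K] K) →ₗ[K] (A →ₗ[K] K))
    (hαD : ∀ (a : A →ₗ[K] K) (x : A), αD a x = a (α x))
    (hmulD : ∀ a b : A →ₗ[K] K, αD (brD a b) = brD (αD a) (αD b))
    -- the dual operators, characterized by their defining pairing identities
    (La Ra : A →ₗ[K] (A →ₗ[K] K) →ₗ[K] (A →ₗ[K] K))
    (hLa : ∀ (x y : A) (a : A →ₗ[K] K), La x a y = -(a (br x y)))
    (hRa : ∀ (x y : A) (a : A →ₗ[K] K), Ra x a y = -(a (br y x)))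
    (Lb Rb : (A →ₗ[K] K) →ₗ[K] A →ₗ[K] A)
    (hLb : ∀ (a b : A →ₗ[K] K) (x : A), b (Lb a x) = -(brD a b x))
    (hRb : ∀ (a b : A →ₗ[K] K) (x : A), b (Rb a x) = -(brD b a x)) :
    -- the bracket of the standard Manin triple on `A ⊕ A*`
    let brP : A × (A →ₗ[K] K) → A × (A →ₗ[K] K) → A × (A →ₗ[K] K) := fun p q =>
      (br p.1 q.1 + Lb p.2 q.1 + (-(Lb q.2 p.1) - Rb q.2 p.1),
       brD p.2 q.2 + La p.1 q.2 + (-(La q.1 p.2) - Ra q.1 p.2))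
    let Φ : A × (A →ₗ[K] K) → A × (A →ₗ[K] K) := fun p => (α p.1, αD p.2)
    let Bf : A × (A →ₗ[K] K) → A × (A →ₗ[K] K) → K := fun p q => p.2 q.1 - q.2 p.1
    -- (i): `A ⊕ A*` is a Hom-Leibniz algebra and the bilinear form is invariant
    ((∀ u w z : A × (A →ₗ[K] K),
        brP (Φ u) (brP w z) = brP (brP u w) (Φ z) + brP (Φ w) (brP u z)) ∧
      (∀ u v w : A × (A →ₗ[K] K),
        Bf (brP (Φ u) (Φ w) + brP (Φ w) (Φ u)) (Φ v) = Bf (Φ u) (brP (Φ v) (Φ w))))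
    ↔
    -- (ii): matched pair
    HomLeibnizMatchedPair br α brD αD La
      (@HSub.hSub _ _ _ (@instHSub _ (@LinearMap.instSub K K A ((A →ₗ[K] K) →ₗ[K] (A →ₗ[K] K)) _ _ _ _ _ _ _))
        (@Neg.neg _ (@LinearMap.instNeg K K A ((A →ₗ[K] K) →ₗ[K] (A →ₗ[K] K)) _ _ _ _ _ _ _) La) Ra)
      Lb (-Lb - Rb) := by
  intro brP Φ Bf
  have hαα : ∀ x, α (α x) = x := LinearMap.congr_fun hinv
  have hLa' := dualLeftMul_equivariant hαD hmul hαα hLa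
  have hRa' := dualRightMul_equivariant hαD hmul hαα hRa
  have hLb' := predualLeftMul_equivariant hαD hmulD hαα hLb
  have hRb' := predualRightMul_equivariant hαD hmulD hαα hRb
  have hInvariant : ∀ u v w, Bf (brP (Φ u) (Φ w) + brP (Φ w) (Φ u)) (Φ v) =
      Bf (Φ u) (brP (Φ v) (Φ w)) := fun u v w =>
    dualSkewPairing_invariant hLa hRa hLb hRb (Φ u) (Φ v) (Φ w)
  -- with the matched pair on the left, unification reads the right actions off the goal
  rw [and_iff_left hInvariant, Iff.comm]
  refine (homLeibniz_matchedPairBracket_iff hLa' (fun x a => ?_) hLb' (fun a x => ?_)).symm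
  · show αD (-(La x a) - Ra x a) = -(La (α x) (αD a)) - Ra (α x) (αD a)
    rw [map_sub, map_neg, hLa', hRa']
  · show α (-(Lb a x) - Rb a x) = -(Lb (αD a) (α x)) - Rb (αD a) (α x)
    rw [map_sub, map_neg, hLb', hRb']

/-- for a finite-dimensional involutive multiplicative Hom-Leibniz
algebra `(A, br, α)` and an involutive multiplicative Hom-Leibniz structure
`(brD, αD)` on the dual space `A* = A →ₗ[K] K` (with `αD` the transpose of `α`),
the standard Manin triple condition on `A ⊕ A*` is equivalent to
`(A, A*, L*, −L*−R*, α*, L*, −L*−R*, α)` being a matched pair of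
Hom-Leibniz algebras. -/
theorem standard_manin_triple_iff_matchedPair
    {K A : Type*} [Field K] [AddCommGroup A] [Module K A] [FiniteDimensional K A]
    (br : A →ₗ[K] A →ₗ[K] A) (α : A →ₗ[K] A)
    (hA : HomLeibniz br α)
    (hmul : ∀ x y : A, α (br x y) = br (α x) (α y))
    (hinv : α ∘ₗ α = LinearMap.id)
    (brD : (A →ₗ[K] K) →ₗ[K] (A →ₗ[K] K) →ₗ[K] (A →ₗ[K] K))
    (αD : (A →ₗ[K] K) →ₗ[K] (A →ₗ[K] K))
    (hαD : ∀ (a : A →ₗ[K] K) (x : A), αD a x = a (α x))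
    (hD : HomLeibniz brD αD)
    (hmulD : ∀ a b : A →ₗ[K] K, αD (brD a b) = brD (αD a) (αD b))
    (hinvD : αD ∘ₗ αD = LinearMap.id)
    -- the dual operators, characterized by their defining pairing identities
    (La Ra : A →ₗ[K] (A →ₗ[K] K) →ₗ[K] (A →ₗ[K] K))
    (hLa : ∀ (x y : A) (a : A →ₗ[K] K), La x a y = -(a (br x y)))
    (hRa : ∀ (x y : A) (a : A →ₗ[K] K), Ra x a y = -(a (br y x)))
    (Lb Rb : (A →ₗ[K] K) →ₗ[K] A →ₗ[K] A)
    (hLb : ∀ (a b : A →ₗ[K] K) (x : A), b (Lb a x) = -(brD a b x))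
    (hRb : ∀ (a b : A →ₗ[K] K) (x : A), b (Rb a x) = -(brD b a x)) :
    -- the bracket of the standard Manin triple on `A ⊕ A*`
    let brP : A × (A →ₗ[K] K) → A × (A →ₗ[K] K) → A × (A →ₗ[K] K) := fun p q =>
      (br p.1 q.1 + Lb p.2 q.1 + (-(Lb q.2 p.1) - Rb q.2 p.1),
       brD p.2 q.2 + La p.1 q.2 + (-(La q.1 p.2) - Ra q.1 p.2))
    let Φ : A × (A →ₗ[K] K) → A × (A →ₗ[K] K) := fun p => (α p.1, αD p.2)
    let Bf : A × (A →ₗ[K] K) → A × (A →ₗ[K] K) → K := fun p q => p.2 q.1 - q.2 p.1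
    -- (i): `A ⊕ A*` is a Hom-Leibniz algebra and the bilinear form is invariant
    ((∀ u w z : A × (A →ₗ[K] K),
        brP (Φ u) (brP w z) = brP (brP u w) (Φ z) + brP (Φ w) (brP u z)) ∧
      (∀ u v w : A × (A →ₗ[K] K),
        Bf (brP (Φ u) (Φ w) + brP (Φ w) (Φ u)) (Φ v) = Bf (Φ u) (brP (Φ v) (Φ w))))
    ↔
    -- (ii): matched pair
    HomLeibnizMatchedPair br α brD αD La
      (@HSub.hSub _ _ _ (@instHSub _ (@LinearMap.instSub K K A ((A →ₗ[K] K) →ₗ[K] (A →ₗ[K] K)) _ _ _ _ _ _ _))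
        (@Neg.neg _ (@LinearMap.instNeg K K A ((A →ₗ[K] K) →ₗ[K] (A →ₗ[K] K)) _ _ _ _ _ _ _) La) Ra)
      Lb (-Lb - Rb) :=
  standard_manin_triple_iff_matchedPair_general br α hmul hinv brD αD hαD hmulD La Ra hLa hRa Lb Rb
    hLb hRb
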